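/- Let (a_1,…,a_m) be a telescopic sequence, S the numerical semigroup it generates, g ≥ 1 the number of gaps, w_1 < ⋯ < w_g the gaps, and w*_1 < ⋯ < w*_g the g smallest elements of S. Then {w_1,…,w_g} and {w*_1,…,w*_g} are disjoint with union {0, 1, …, 2g − 1}, and for every 1 ≤ i ≤ g one has 2g − 1 − w*_{g+1−i} = w_i. -/

import Mathlib

/-- `dseq a i = gcd(a_1, …, a_i)`. -/
def dseq (a : ℕ → ℕ) (i : ℕ) : ℕ := (Finset.Icc 1 i).gcd a

/-- The telescopic condition:
`a_i/d_i ∈ (a_1/d_{i-1})ℤ_{≥0} + ⋯ + (a_{i-1}/d_{i-1})ℤ_{≥0}` for `2 ≤ i ≤ m`. -/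
def Telescopic (m : ℕ) (a : ℕ → ℕ) : Prop :=
  ∀ i, 2 ≤ i → i ≤ m →
    ∃ k : ℕ → ℕ,
      a i / dseq a i = ∑ j ∈ Finset.Icc 1 (i - 1), (a j / dseq a (i - 1)) * k j

/-!
The semigroup generated by `a_1/d_i, …, a_i/d_i` arises from the previous one by gluing:
`S_{i+1} = c S_i + b ℕ` with `c = d_i/d_{i+1}` coprime to `b = a_{i+1}/d_{i+1}`, and
telescopicity says exactly that `b ∈ S_i`. Gluing preserves symmetry (`z ∈ S ↔ F - z ∉ S`
for all integers `z`), with `F ↦ cF + (c-1)b`, and `S_1 = ℕ` is symmetric about `-1`.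
For a symmetric semigroup with Frobenius number `F`, the map `n ↦ F - n` exchanges the gaps
with the elements of `S ∩ [0, F]`; hence `F + 1 = 2g`, the `g` smallest elements of `S` are
those in `[0, F]`, and reversing them gives the gaps in increasing order.
-/

open Set

def IsSymmetricAbout (T : Set ℤ) (F : ℤ) : Prop := ∀ z, z ∈ T ↔ F - z ∉ T

def glue (T : Set ℤ) (c b : ℕ) : Set ℤ := {z | ∃ t ∈ T, ∃ u : ℕ, z = c * t + b * u}

lemma exists_lt_dvd_sub_mul {c b : ℕ} (hc : 0 < c) (hcb : c.Coprime b) (z : ℤ) :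
    ∃ u < c, (c : ℤ) ∣ z - b * u := by
  have : NeZero c := ⟨hc.ne'⟩
  refine ⟨((z : ZMod c) * (b : ZMod c)⁻¹).val, ZMod.val_lt _, ?_⟩
  rw [← ZMod.intCast_zmod_eq_zero_iff_dvd]
  push_cast
  rw [ZMod.natCast_zmod_val, mul_left_comm, ZMod.coe_mul_inv_eq_one b hcb.symm, mul_one, sub_self]

lemma mem_glue_iff_exists_lt {T : Set ℤ} {c b : ℕ} (hc : 0 < c) (hb : ∀ t ∈ T, t + b ∈ T)
    (z : ℤ) : z ∈ glue T c b ↔ ∃ u < c, ∃ t ∈ T, z = c * t + b * u := by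
  have hbq : ∀ q : ℕ, ∀ t ∈ T, t + q * b ∈ T := by
    intro q
    induction q with
    | zero => simp
    | succ q ih => intro t ht; simpa [add_mul, add_assoc] using hb _ (ih t ht)
  constructor
  · rintro ⟨t, ht, u, rfl⟩
    refine ⟨u % c, Nat.mod_lt _ hc, t + (u / c : ℕ) * b, hbq _ t ht, ?_⟩
    have hu : (u : ℤ) = c * (u / c : ℕ) + (u % c : ℕ) := by
      exact_mod_cast (Nat.div_add_mod u c).symm
    rw [hu]
    ring
  · rintro ⟨u, -, t, ht, rfl⟩
    exact ⟨t, ht, u, rfl⟩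

theorem IsSymmetricAbout.glue {T : Set ℤ} {F : ℤ} (hT : IsSymmetricAbout T F) {c b : ℕ}
    (hc : 0 < c) (hcb : c.Coprime b) (hb : ∀ t ∈ T, t + b ∈ T) :
    IsSymmetricAbout (glue T c b) (c * F + (c - 1) * b) := by
  intro z
  simp only [mem_glue_iff_exists_lt hc hb]
  constructor
  · rintro ⟨u, hu, t, ht, rfl⟩ ⟨u', hu', t', ht', heq⟩
    -- reducing modulo `c` forces `u + u' = c - 1`, and then `t' = F - t`
    have hcop : IsCoprime (c : ℤ) b := Nat.isCoprime_iff_coprime.mpr hcb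
    have hdvd : (c : ℤ) ∣ (c - 1 - u - u') :=
      hcop.dvd_of_dvd_mul_left ⟨t + t' - F, by linear_combination heq⟩
    have hu' : (c : ℤ) - 1 - u - u' = 0 :=
      Int.eq_zero_of_abs_lt_dvd hdvd (abs_lt.mpr ⟨by omega, by omega⟩)
    have htt : t' = F - t := by
      have : (c : ℤ) * (F - t - t') = 0 := by linear_combination heq - b * hu'
      have := (mul_eq_zero.mp this).resolve_left (by positivity)
      linarith
    exact (hT t).mp ht (htt ▸ ht')
  · intro hz'
    by_contra hz
    apply hz'
    obtain ⟨u, hu, t, ht⟩ := exists_lt_dvd_sub_mul hc hcb z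
    have htT : t ∉ T := fun htT => hz ⟨u, hu, t, htT, by linear_combination ht⟩
    refine ⟨c - 1 - u, by omega, F - t, not_not.mp (mt (hT t).mpr htT), ?_⟩
    have hcast : ((c - 1 - u : ℕ) : ℤ) = c - 1 - u := by omega
    rw [hcast]
    linear_combination -ht

lemma dseq_dvd (a : ℕ → ℕ) {i j : ℕ} (hj : 1 ≤ j) (hji : j ≤ i) : dseq a i ∣ a j :=
  Finset.gcd_dvd (Finset.mem_Icc.mpr ⟨hj, hji⟩)

lemma dseq_pos {a : ℕ → ℕ} (ha : 0 < a 1) {i : ℕ} (hi : 1 ≤ i) : 0 < dseq a i :=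
  Nat.pos_of_dvd_of_pos (dseq_dvd a le_rfl hi) ha

lemma dseq_one (a : ℕ → ℕ) : dseq a 1 = a 1 := by
  simp [dseq]

lemma dseq_succ (a : ℕ → ℕ) {i : ℕ} (hi : 1 ≤ i) :
    dseq a (i + 1) = Nat.gcd (a (i + 1)) (dseq a i) := by
  rw [dseq, ← Finset.insert_Icc_right_eq_Icc_add_one (by omega), Finset.gcd_insert]
  rfl

lemma dseq_succ_dvd (a : ℕ → ℕ) {i : ℕ} (hi : 1 ≤ i) : dseq a (i + 1) ∣ dseq a i :=
  dseq_succ a hi ▸ Nat.gcd_dvd_right _ _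

lemma div_dseq_succ_eq (a : ℕ → ℕ) {i j : ℕ} (ha : 0 < a 1) (hj : 1 ≤ j) (hji : j ≤ i) :
    a j / dseq a (i + 1) = dseq a i / dseq a (i + 1) * (a j / dseq a i) := by
  rw [Nat.div_mul_div_comm (dseq_succ_dvd a (hj.trans hji)) (dseq_dvd a hj hji),
    mul_comm (dseq a i), Nat.mul_div_mul_right _ _ (dseq_pos ha (hj.trans hji))]

-- Working in `ℤ` lets the symmetry `z ↦ F - z` be stated without truncated subtraction.
def scaledSemigroup (a : ℕ → ℕ) (i : ℕ) : Set ℤ :=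
  {z | ∃ x : ℕ → ℕ, z = ∑ j ∈ Finset.Icc 1 i, ((a j / dseq a i : ℕ) : ℤ) * x j}

lemma nonneg_of_mem_scaledSemigroup {a : ℕ → ℕ} {i : ℕ} {z : ℤ}
    (hz : z ∈ scaledSemigroup a i) : 0 ≤ z := by
  obtain ⟨x, rfl⟩ := hz
  positivity

lemma add_mem_scaledSemigroup {a : ℕ → ℕ} {i : ℕ} {z₁ z₂ : ℤ}
    (h₁ : z₁ ∈ scaledSemigroup a i) (h₂ : z₂ ∈ scaledSemigroup a i) :
    z₁ + z₂ ∈ scaledSemigroup a i := by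
  obtain ⟨x, rfl⟩ := h₁
  obtain ⟨y, rfl⟩ := h₂
  refine ⟨x + y, ?_⟩
  simp only [Pi.add_apply, Nat.cast_add, mul_add, Finset.sum_add_distrib]

lemma scaledSemigroup_one {a : ℕ → ℕ} (ha : 0 < a 1) :
    scaledSemigroup a 1 = {z | 0 ≤ z} := by
  ext z
  refine ⟨nonneg_of_mem_scaledSemigroup, fun hz => ⟨fun _ => z.toNat, ?_⟩⟩
  rw [Finset.Icc_self, Finset.sum_singleton, dseq_one, Nat.div_self ha]
  simp [Int.toNat_of_nonneg hz.out]

lemma scaledSemigroup_succ {a : ℕ → ℕ} (ha : 0 < a 1) {i : ℕ} (hi : 1 ≤ i) :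
    scaledSemigroup a (i + 1) =
      glue (scaledSemigroup a i) (dseq a i / dseq a (i + 1)) (a (i + 1) / dseq a (i + 1)) := by
  have hi' : i + 1 ∉ Finset.Icc 1 i := by simp
  have hsum : ∀ x : ℕ → ℕ,
      ∑ j ∈ Finset.Icc 1 (i + 1), ((a j / dseq a (i + 1) : ℕ) : ℤ) * x j
        = ((dseq a i / dseq a (i + 1) : ℕ) : ℤ)
            * ∑ j ∈ Finset.Icc 1 i, ((a j / dseq a i : ℕ) : ℤ) * x j
          + ((a (i + 1) / dseq a (i + 1) : ℕ) : ℤ) * x (i + 1) := by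
    intro x
    rw [← Finset.insert_Icc_right_eq_Icc_add_one (by omega), Finset.sum_insert hi',
      Finset.mul_sum, add_comm]
    congr 1
    refine Finset.sum_congr rfl fun j hj => ?_
    obtain ⟨hj1, hji⟩ := Finset.mem_Icc.mp hj
    rw [div_dseq_succ_eq a ha hj1 hji]
    push_cast
    ring
  ext z
  constructor
  · rintro ⟨x, rfl⟩
    exact ⟨_, ⟨x, rfl⟩, x (i + 1), hsum x⟩
  · rintro ⟨t, ⟨y, rfl⟩, u, rfl⟩
    refine ⟨Function.update y (i + 1) u, ?_⟩
    rw [hsum, Function.update_self]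
    congr 2
    refine Finset.sum_congr rfl fun j hj => ?_
    rw [Function.update_of_ne (ne_of_mem_of_not_mem hj hi')]

theorem Telescopic.isSymmetricAbout_scaledSemigroup {m : ℕ} {a : ℕ → ℕ}
    (htel : Telescopic m a) (ha : 0 < a 1) {i : ℕ} (hi : 1 ≤ i) (him : i ≤ m) :
    ∃ F, IsSymmetricAbout (scaledSemigroup a i) F := by
  induction i, hi using Nat.le_induction with
  | base => exact ⟨-1, fun z => by simp [scaledSemigroup_one ha]; omega⟩
  | succ i hi ih =>
    obtain ⟨F, hF⟩ := ih (by omega)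
    rw [scaledSemigroup_succ ha hi]
    have hd : 0 < dseq a (i + 1) := dseq_pos ha (by omega)
    have hc : 0 < dseq a i / dseq a (i + 1) :=
      Nat.div_pos (Nat.le_of_dvd (dseq_pos ha hi) (dseq_succ_dvd a hi)) hd
    have hcb : (dseq a i / dseq a (i + 1)).Coprime (a (i + 1) / dseq a (i + 1)) := by
      rw [dseq_succ a hi]
      exact (Nat.coprime_div_gcd_div_gcd (dseq_succ a hi ▸ hd)).symm
    have hb : ((a (i + 1) / dseq a (i + 1) : ℕ) : ℤ) ∈ scaledSemigroup a i := by
      obtain ⟨k, hk⟩ := htel (i + 1) (by omega) him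
      rw [Nat.add_sub_cancel] at hk
      exact ⟨k, by rw [hk]; push_cast; rfl⟩
    exact ⟨_, hF.glue hc hcb fun t ht => add_mem_scaledSemigroup ht hb⟩

def generatedSemigroup (m : ℕ) (a : ℕ → ℕ) : Set ℕ :=
  {n | ∃ x : ℕ → ℕ, n = ∑ i ∈ Finset.Icc 1 m, a i * x i}

lemma natCast_mem_scaledSemigroup_iff {m : ℕ} {a : ℕ → ℕ} (hgcd : dseq a m = 1) (n : ℕ) :
    (n : ℤ) ∈ scaledSemigroup a m ↔ n ∈ generatedSemigroup m a := by
  simp only [scaledSemigroup, generatedSemigroup, hgcd, Nat.div_one]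
  exact exists_congr fun x => by norm_cast

-- `F` is then the Frobenius number (largest gap) of `S`.
def IsSymmetricAt (S : Set ℕ) (F : ℕ) : Prop := ∀ n, n ∉ S ↔ n ≤ F ∧ F - n ∈ S

lemma IsSymmetricAbout.isSymmetricAt_preimage {T : Set ℤ} {F : ℤ} (hT : IsSymmetricAbout T F)
    (hnonneg : ∀ z ∈ T, 0 ≤ z) {n₀ : ℕ} (hn₀ : (n₀ : ℤ) ∉ T) :
    IsSymmetricAt (Nat.cast ⁻¹' T) F.toNat := by
  have hF : 0 ≤ F := by
    have := hnonneg _ (not_not.mp (mt (hT n₀).mpr hn₀))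
    omega
  intro n
  simp only [mem_preimage, hT n, not_not]
  constructor
  · intro hn
    have := hnonneg _ hn
    refine ⟨by omega, ?_⟩
    rwa [Nat.cast_sub (by omega), Int.toNat_of_nonneg hF]
  · rintro ⟨hn, hFn⟩
    rwa [Nat.cast_sub hn, Int.toNat_of_nonneg hF] at hFn

theorem Telescopic.isSymmetricAt {m : ℕ} {a : ℕ → ℕ} (htel : Telescopic m a) (hm : 1 ≤ m)
    (ha : 0 < a 1) (hgcd : dseq a m = 1) {n₀ : ℕ} (hn₀ : n₀ ∉ generatedSemigroup m a) :
    ∃ F, IsSymmetricAt (generatedSemigroup m a) F := by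
  obtain ⟨F, hF⟩ := htel.isSymmetricAbout_scaledSemigroup ha hm le_rfl
  have hS : generatedSemigroup m a = Nat.cast ⁻¹' scaledSemigroup a m :=
    ext fun n => (natCast_mem_scaledSemigroup_iff hgcd n).symm
  rw [hS] at hn₀ ⊢
  exact ⟨_, hF.isSymmetricAt_preimage (fun _ => nonneg_of_mem_scaledSemigroup) hn₀⟩

namespace IsSymmetricAt

variable {S : Set ℕ} {F : ℕ}

lemma compl_subset_Iic (hS : IsSymmetricAt S F) : Sᶜ ⊆ Iic F :=
  fun n hn => ((hS n).mp hn).1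

lemma image_sub_inter_Iic (hS : IsSymmetricAt S F) : (F - ·) '' (S ∩ Iic F) = Sᶜ := by
  ext n
  constructor
  · rintro ⟨k, ⟨hk, hkF⟩, rfl⟩
    exact (hS _).mpr ⟨Nat.sub_le F k, by rwa [Nat.sub_sub_self hkF]⟩
  · intro hn
    obtain ⟨hnF, hFn⟩ := (hS n).mp hn
    exact ⟨F - n, ⟨hFn, Nat.sub_le F n⟩, Nat.sub_sub_self hnF⟩

lemma ncard_inter_Iic (hS : IsSymmetricAt S F) : (S ∩ Iic F).ncard = Sᶜ.ncard := by
  have hinj : InjOn (F - ·) (S ∩ Iic F) := fun x hx y hy hxy => by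
    have := hx.2; have := hy.2
    simp_all only [mem_Iic]
    omega
  rw [← hS.image_sub_inter_Iic, hinj.ncard_image]

lemma two_mul_ncard_compl (hS : IsSymmetricAt S F) : 2 * Sᶜ.ncard = F + 1 := by
  have hunion : (S ∩ Iic F) ∪ Sᶜ = Iic F := by
    rw [inter_comm, ← inter_eq_right.mpr hS.compl_subset_Iic]
    exact inter_union_compl _ _
  rw [← ncard_Iic_nat, ← hunion,
    ncard_union_eq (disjoint_compl_right.mono_left inter_subset_left)
    (toFinite _) ((finite_Iic F).subset hS.compl_subset_Iic), hS.ncard_inter_Iic, two_mul]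

end IsSymmetricAt

theorem StrictMonoOn.eqOn_of_image_eq {α β : Type*} [LinearOrder α] [WellFoundedLT α]
    [LinearOrder β] {s : Set α} {f h : α → β} (hf : StrictMonoOn f s) (hh : StrictMonoOn h s)
    (himage : f '' s = h '' s) : EqOn f h s := by
  have key : ∀ {f h : α → β}, StrictMonoOn f s → StrictMonoOn h s → f '' s = h '' s →
      ∀ i ∈ s, (∀ j ∈ s, j < i → f j = h j) → h i ≤ f i := by
    intro f h hf hh himage i hi hlt
    obtain ⟨j, hj, hji⟩ : f i ∈ h '' s := himage ▸ mem_image_of_mem f hi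
    rcases lt_or_ge j i with hji' | hij
    · exact absurd (hlt j hj hji' ▸ hji) (hf hj hi hji').ne
    · exact hji ▸ hh.monotoneOn hi hj hij
  intro i hi
  induction i using WellFoundedLT.induction with
  | _ i ih =>
    have hlt : ∀ j ∈ s, j < i → f j = h j := fun j hj hji => ih j hji hj
    exact le_antisymm (key hh hf himage.symm i hi fun j hj hji => (hlt j hj hji).symm)
      (key hf hh himage i hi hlt)

lemma image_Icc_eq_inter_Iic_of_forall_lt {S : Set ℕ} {N g : ℕ} {f : ℕ → ℕ}
    (hf : StrictMonoOn f (Icc 1 g)) (hfS : ∀ i ∈ Icc 1 g, f i ∈ S)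
    (hsmall : ∀ n ∈ S, n ∉ f '' Icc 1 g → f g < n) (hcard : (S ∩ Iic N).ncard = g) :
    f '' Icc 1 g = S ∩ Iic N := by
  have hfcard : (f '' Icc 1 g).ncard = g := by rw [hf.injOn.ncard_image, ncard_Icc_nat]; omega
  have hsub : S ∩ Iic N ⊆ f '' Icc 1 g := by
    rintro n ⟨hnS, hnN⟩
    by_contra hn
    have hlt : f '' Icc 1 g ⊂ S ∩ Iic N := by
      refine (ssubset_iff_of_subset ?_).mpr ⟨n, ⟨hnS, hnN⟩, hn⟩
      rintro _ ⟨i, hi, rfl⟩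
      have := hf.monotoneOn hi ⟨hi.1.trans hi.2, le_rfl⟩ hi.2
      exact ⟨hfS i hi, by have := hsmall n hnS hn; simp only [mem_Iic] at hnN ⊢; omega⟩
    exact (ncard_lt_ncard hlt ((finite_Iic N).inter_of_right S)).ne (hfcard.trans hcard.symm)
  exact (eq_of_subset_of_ncard_le hsub (hfcard.trans hcard.symm).le (toFinite _)).symm

lemma image_Icc_rev (g : ℕ) : (fun i => g + 1 - i) '' Icc 1 g = Icc 1 g := by
  ext i
  refine ⟨?_, fun hi => ⟨g + 1 - i, ?_, ?_⟩⟩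
  · rintro ⟨j, hj, rfl⟩; simp only [mem_Icc] at hj ⊢; omega
  · simp only [mem_Icc] at hi ⊢; omega
  · simp only [mem_Icc] at hi ⊢; omega

lemma IsSymmetricAt.eqOn_sub_rev {S : Set ℕ} {F : ℕ} (hS : IsSymmetricAt S F) {g : ℕ}
    {w w' : ℕ → ℕ} (hw : StrictMonoOn w (Icc 1 g)) (hwS : w '' Icc 1 g = Sᶜ)
    (hw' : StrictMonoOn w' (Icc 1 g)) (hw'S : w' '' Icc 1 g = S ∩ Iic F) :
    EqOn (fun i => F - w' (g + 1 - i)) w (Icc 1 g) := by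
  have hle : ∀ i ∈ Icc 1 g, w' i ≤ F := fun i hi => (hw'S ▸ mem_image_of_mem w' hi).2
  refine StrictMonoOn.eqOn_of_image_eq (fun i hi j hj hij => ?_) hw ?_
  · have hi' : g + 1 - i ∈ Icc 1 g := by simp only [mem_Icc] at hi ⊢; omega
    have hj' : g + 1 - j ∈ Icc 1 g := by simp only [mem_Icc] at hj ⊢; omega
    have := hw' hj' hi' (by simp only [mem_Icc] at hi hj; omega)
    have := hle _ hi'
    omega
  · rw [hwS, ← hS.image_sub_inter_Iic, ← hw'S, image_image]
    conv_rhs => rw [← image_Icc_rev g, image_image]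

/-- Let `(a_1,…,a_m)` be telescopic, `S` the numerical semigroup it generates,
`g ≥ 1` the number of gaps, `w_1 < ⋯ < w_g` the gaps and `w*_1 < ⋯ < w*_g` the
`g` smallest elements of `S`.  Then `{w_1,…,w_g}` and `{w*_1,…,w*_g}` are
disjoint with union `{0, 1, …, 2g-1}`, and `2g - 1 - w*_{g+1-i} = w_i` for all
`1 ≤ i ≤ g`. -/
theorem telescopic_gaps_nongaps_duality
    (m : ℕ) (hm : 2 ≤ m) (a : ℕ → ℕ)
    (hpos : ∀ i, 1 ≤ i → i ≤ m → 0 < a i)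
    (hgcd : (Finset.Icc 1 m).gcd a = 1)
    (htel : Telescopic m a)
    (g : ℕ)
    (hg : g = Set.ncard {n : ℕ | ¬ ∃ x : ℕ → ℕ, n = ∑ i ∈ Finset.Icc 1 m, a i * x i})
    (hg1 : 1 ≤ g)
    (w w' : ℕ → ℕ)
    -- `w_1 < w_2 < ⋯ < w_g` enumerates the gaps of `S`:
    (hwmono : StrictMonoOn w (Set.Icc 1 g))
    (hwgaps : ∀ n : ℕ, (¬ ∃ x : ℕ → ℕ, n = ∑ i ∈ Finset.Icc 1 m, a i * x i) ↔
      ∃ i, 1 ≤ i ∧ i ≤ g ∧ w i = n)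
    -- `w*_1 < w*_2 < ⋯ < w*_g` enumerates the `g` smallest elements of `S`:
    (hw'mono : StrictMonoOn w' (Set.Icc 1 g))
    (hw'mem : ∀ i, 1 ≤ i → i ≤ g → ∃ x : ℕ → ℕ, w' i = ∑ j ∈ Finset.Icc 1 m, a j * x j)
    (hw'small : ∀ n : ℕ, (∃ x : ℕ → ℕ, n = ∑ j ∈ Finset.Icc 1 m, a j * x j) →
      (∀ i, 1 ≤ i → i ≤ g → w' i ≠ n) → w' g < n) :
    ({n : ℕ | ∃ i, 1 ≤ i ∧ i ≤ g ∧ w i = n} ∩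
        {n : ℕ | ∃ i, 1 ≤ i ∧ i ≤ g ∧ w' i = n} = ∅) ∧
    ({n : ℕ | ∃ i, 1 ≤ i ∧ i ≤ g ∧ w i = n} ∪
        {n : ℕ | ∃ i, 1 ≤ i ∧ i ≤ g ∧ w' i = n} = Set.Iio (2 * g)) ∧
    (∀ i, 1 ≤ i → i ≤ g → 2 * g - 1 - w' (g + 1 - i) = w i) := by
  set S := generatedSemigroup m a
  have himage (f : ℕ → ℕ) : {n | ∃ i, 1 ≤ i ∧ i ≤ g ∧ f i = n} = f '' Icc 1 g := by
    ext
    simp [and_assoc]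
  have hwS : w '' Icc 1 g = Sᶜ := by
    rw [← himage]
    exact ext fun n => (hwgaps n).symm
  obtain ⟨F, hS⟩ := htel.isSymmetricAt (by omega) (hpos 1 le_rfl (by omega)) hgcd
    ((hwgaps (w 1)).mpr ⟨1, le_rfl, hg1, rfl⟩)
  have hF : F + 1 = 2 * g := by rw [hg, ← hS.two_mul_ncard_compl]; rfl
  have hw'S : w' '' Icc 1 g = S ∩ Iic F := by
    refine image_Icc_eq_inter_Iic_of_forall_lt hw'mono (fun i hi => hw'mem i hi.1 hi.2)
      (fun n hn hn' => hw'small n hn fun i h1 h2 hi => hn' ⟨i, ⟨h1, h2⟩, hi⟩) ?_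
    rw [hS.ncard_inter_Iic, hg]
    rfl
  have hIio : Iio (2 * g) = Iic F := by ext; simp only [mem_Iio, mem_Iic]; omega
  rw [himage, himage, hwS, hw'S, hIio]
  refine ⟨?_, ?_, fun i h1 h2 => ?_⟩
  · rw [← inter_assoc, compl_inter_self, empty_inter]
  · rw [union_inter_distrib_left, compl_union_self, univ_inter,
      union_eq_right.mpr hS.compl_subset_Iic]
  · rw [show 2 * g - 1 = F by omega]
    exact hS.eqOn_sub_rev hwmono hwS hw'mono hw'S ⟨h1, h2⟩
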